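/- arXiv:2603.05076 — 6 statements merged into one kernel-verified Lean document; each statement's English description precedes it below -/
import Mathlib

section
/- For every real number d with 0 < d < 1 and every p ≥ 0, the inequality max(0,3-2p)/(2(3+2p)) · (1 - d^((3+2p)/2)) + 1/(3+p) · (d^(-3/2) - d^((3+2p)/2)) + 1/(2(1+p)) · (1 - d^(1+p))/(1 - d^(3/2)) < (1/2)(1 + d^(-3/2)) holds. -/
open Real

lemma poly_aux (x : ℝ) (h0 : 0 < x) (h1 : x < 1) : 3 * x^3 < 5 * x^7 + 1 := by
  nlinarith [sq_nonneg (x^3 - x^2), sq_nonneg (x^2 - x), sq_nonneg (x - 1), sq_nonneg (x^3 - 1/2),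
    sq_nonneg (x^2 - 1/2), mul_pos h0 h0, pow_pos h0 3, sq_nonneg (x^3 + x^2 - 1)]

theorem stmt_0 (d p : ℝ) (hd0 : 0 < d) (hd1 : d < 1) (hp : 0 ≤ p) :
    max 0 (3 - 2*p) / (2*(3 + 2*p)) * (1 - d ^ ((3 + 2*p)/2))
      + 1/(3 + p) * (d ^ (-(3:ℝ)/2) - d ^ ((3 + 2*p)/2))
      + 1/(2*(1 + p)) * ((1 - d ^ (1 + p)) / (1 - d ^ ((3:ℝ)/2)))
      < (1/2) * (1 + d ^ (-(3:ℝ)/2)) := by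
  set q := d ^ ((3 + 2*p)/2) with hq
  set b := d ^ (-(3:ℝ)/2) with hb
  set e := d ^ (1 + p) with he
  set A := d ^ ((3:ℝ)/2) with hA
  have hq0 : 0 < q := rpow_pos_of_pos hd0 _
  have hq1 : q < 1 := rpow_lt_one hd0.le hd1 (by linarith)
  have hA0 : 0 < A := rpow_pos_of_pos hd0 _
  have hA1 : A < 1 := rpow_lt_one hd0.le hd1 (by norm_num)
  have he0 : 0 < e := rpow_pos_of_pos hd0 _
  have he1 : e < 1 := rpow_lt_one hd0.le hd1 (by linarith)
  have hb1 : 1 < b := by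
    rw [hb]
    exact (one_lt_rpow_iff_of_pos hd0).mpr (Or.inr ⟨hd1, by norm_num⟩)
  have hbA : b * A = 1 := by
    rw [hb, hA, ← Real.rpow_add hd0]; norm_num
  have hbq : q < b := lt_trans hq1 hb1
  -- term 2 bound
  have ht2 : 1/(3 + p) * (b - q) ≤ (b - q)/3 := by
    rw [div_eq_mul_inv (b - q) 3, mul_comm (b - q)]
    apply mul_le_mul_of_nonneg_right _ (by linarith)
    rw [one_div]
    apply inv_anti₀ <;> linarith
  rcases le_or_gt p (1/2) with hple | hpgt
  · -- small p case
    have hAe : A ≤ e := by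
      rw [hA, he]
      exact rpow_le_rpow_of_exponent_ge hd0 hd1.le (by linarith)
    have ht3 : 1/(2*(1 + p)) * ((1 - e) / (1 - A)) ≤ 1/2 := by
      have h1 : (1 - e) / (1 - A) ≤ 1 := by
        apply div_le_one_of_le₀ <;> linarith
      have h2 : (0:ℝ) < 2*(1+p) := by linarith
      calc 1/(2*(1 + p)) * ((1 - e) / (1 - A)) ≤ 1/(2*(1+p)) * 1 :=
            mul_le_mul_of_nonneg_left h1 (by positivity)
        _ ≤ 1/2 := by
            rw [mul_one]
            apply div_le_div_of_nonneg_left (by norm_num) (by norm_num) (by linarith)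
    have ht1 : max 0 (3 - 2*p) / (2*(3 + 2*p)) * (1 - q) ≤ (1 - q)/2 := by
      have hc : max 0 (3 - 2*p) / (2*(3 + 2*p)) ≤ 1/2 := by
        rw [max_eq_right (by linarith : (0:ℝ) ≤ 3 - 2*p)]
        rw [div_le_div_iff₀ (by linarith) (by norm_num)]
        linarith
      calc max 0 (3 - 2*p) / (2*(3 + 2*p)) * (1 - q) ≤ 1/2 * (1 - q) :=
            mul_le_mul_of_nonneg_right hc (by linarith)
        _ = (1 - q)/2 := by ring
    -- key : 3 < b + 5*d^2
    have hd2q : d ^ (2:ℝ) ≤ q := by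
      rw [hq]
      exact rpow_le_rpow_of_exponent_ge hd0 hd1.le (by linarith)
    have hd2 : d ^ (2:ℝ) = d^2 := by
      rw [← Real.rpow_natCast d 2]; norm_num
    rw [hd2] at hd2q
    have hx : ∃ x : ℝ, 0 < x ∧ x < 1 ∧ x^3 = A ∧ x^4 = d^2 := by
      refine ⟨d ^ ((1:ℝ)/2), rpow_pos_of_pos hd0 _, rpow_lt_one hd0.le hd1 (by norm_num), ?_, ?_⟩
      · rw [hA, ← Real.rpow_natCast (d ^ ((1:ℝ)/2)) 3, ← Real.rpow_mul hd0.le]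
        norm_num
      · rw [← Real.rpow_natCast (d ^ ((1:ℝ)/2)) 4, ← Real.rpow_mul hd0.le,
          ← Real.rpow_natCast d 2]
        norm_num
    obtain ⟨x, hx0, hx1, hxA, hxd⟩ := hx
    have hpoly := poly_aux x hx0 hx1
    have hkey : 3 < b + 5*d^2 := by
      have h7 : x^7 = d^2 * A := by rw [← hxA, ← hxd]; ring
      have : 3 * A < 5 * (d^2 * A) + b * A := by
        rw [hbA, ← h7, ← hxA]; linarith
      nlinarith [this, hA0]
    linarith
  · -- large p case
    have ht1 : max 0 (3 - 2*p) / (2*(3 + 2*p)) * (1 - q) ≤ (1 - q)/4 := by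
      have hc : max 0 (3 - 2*p) / (2*(3 + 2*p)) ≤ 1/4 := by
        rw [div_le_div_iff₀ (by linarith) (by norm_num)]
        rcases le_total (3 - 2*p) 0 with h | h
        · rw [max_eq_left h]; linarith
        · rw [max_eq_right h]; linarith
      calc max 0 (3 - 2*p) / (2*(3 + 2*p)) * (1 - q) ≤ 1/4 * (1 - q) :=
            mul_le_mul_of_nonneg_right hc (by linarith)
        _ = (1 - q)/4 := by ring
    have ht3 : 1/(2*(1 + p)) * ((1 - e) / (1 - A)) ≤ 1/3 := by
      set c : ℝ := (2 + 2*p)/3 with hc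
      have hc1 : 1 ≤ c := by rw [hc]; linarith
      have hbern : 1 + c * (A - 1) ≤ e := by
        have := one_add_mul_self_le_rpow_one_add (by linarith : (-1:ℝ) ≤ A - 1) hc1
        rw [show (1:ℝ) + (A - 1) = A by ring] at this
        have hAc : A ^ c = e := by
          rw [hA, he, ← Real.rpow_mul hd0.le]
          norm_num [hc]
          ring_nf
        linarith [hAc ▸ this]
      have hr : (1 - e) / (1 - A) ≤ c := by
        rw [div_le_iff₀ (by linarith)]
        nlinarith
      calc 1/(2*(1 + p)) * ((1 - e) / (1 - A)) ≤ 1/(2*(1+p)) * c := by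
            apply mul_le_mul_of_nonneg_left hr (by positivity)
        _ = 1/3 := by
            rw [hc]; field_simp
      done
    linarith
end

section
/- For every p ≥ 0 and every x with 0 < x < 1, one has H(p,x) := K(p)·x^(-3) + B(p) + C(p)·x^(3+2p) > 1, where B(p) = 4p/(3+2p), C(p) = 1 - 4p/(3+2p) + 2/(3+p), and K(p) = (1+p)/(3+p). -/
set_option maxHeartbeats 800000


open Real

theorem stmt_1 (p x : ℝ) (hp : 0 ≤ p) (hx0 : 0 < x) (hx1 : x < 1) :
    ((1 + p)/(3 + p)) * x ^ (-(3:ℝ)) + 4*p/(3 + 2*p)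
      + (1 - 4*p/(3 + 2*p) + 2/(3 + p)) * x ^ (3 + 2*p) > 1 := by
  have h3p : (0:ℝ) < 3 + p := by linarith
  have h32p : (0:ℝ) < 3 + 2*p := by linarith
  set K : ℝ := (1+p)/(3+p) with hK
  set B : ℝ := 4*p/(3+2*p) with hB
  set C : ℝ := 1 - 4*p/(3+2*p) + 2/(3+p) with hC
  have hKpos : 0 < K := div_pos (by linarith) h3p
  have hK1 : K < 1 := by rw [hK, div_lt_one h3p]; linarith
  have hBpos : 0 ≤ B := div_nonneg (by linarith) h32p.le
  have hsum : K + B + C = 2 := by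
    rw [hK, hB, hC]; field_simp; ring
  have hCval : C = (5+2*p)*(3-p)/((3+2*p)*(3+p)) := by
    rw [hC]; field_simp; ring
  have hKalt : K = 1 - 2/(3+p) := by
    rw [hK]; field_simp; ring
  have hKC : K - C * ((3+2*p)/3) = 2*(p-2)/3 := by
    rw [hK, hCval]; field_simp; ring
  clear_value K B C
  -- powers of x
  have hneg : x ^ (-(3:ℝ)) = (x ^ (3:ℝ))⁻¹ := by
    rw [Real.rpow_neg hx0.le]
  set s : ℝ := x ^ (3:ℝ) with hsdef
  have hspos : 0 < s := Real.rpow_pos_of_pos hx0 _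
  have hs1 : s < 1 := Real.rpow_lt_one hx0.le hx1 (by norm_num)
  have hxa : x ^ (3+2*p) = s ^ ((3+2*p)/3) := by
    have h1 : (3:ℝ)*((3+2*p)/3) = 3+2*p := by ring
    rw [hsdef, ← Real.rpow_mul hx0.le, h1]
  have hxapos : 0 < x ^ (3+2*p) := Real.rpow_pos_of_pos hx0 _
  have hxalt1 : x ^ (3+2*p) < 1 := Real.rpow_lt_one hx0.le hx1 (by linarith)
  clear_value s
  rw [hneg]
  rcases le_or_gt 3 p with hp3 | hp3
  · -- C ≤ 0 : everything is at least its value at x = 1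
    have hCneg : C ≤ 0 := by
      rw [hCval]
      apply div_nonpos_of_nonpos_of_nonneg
      · nlinarith
      · positivity
    have h1 : C ≤ C * x ^ (3+2*p) := by nlinarith
    have h2 : K < K * s⁻¹ := by
      have h3 : (1:ℝ) < s⁻¹ := (one_lt_inv₀ hspos).mpr hs1
      nlinarith
    linarith
  · have hCpos : 0 < C := by
      rw [hCval]
      apply div_pos (by nlinarith) (by positivity)
    rcases le_or_gt s K with hsK | hsK
    · -- K/s ≥ 1
      have h1 : (1:ℝ) ≤ K * s⁻¹ := by
        have h2 : (1:ℝ) ≤ K / s := (one_le_div hspos).mpr hsK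
        rwa [div_eq_mul_inv] at h2
      have h2 : 0 < C * x ^ (3+2*p) := by positivity
      linarith
    · -- Bernoulli case
      have hq : (1:ℝ) ≤ (3+2*p)/3 := by
        rw [le_div_iff₀ (by norm_num : (0:ℝ) < 3)]; linarith
      have hbern : 1 + ((3+2*p)/3) * (s - 1) ≤ s ^ ((3+2*p)/3) := by
        have h0 := one_add_mul_self_le_rpow_one_add (by linarith : (-1:ℝ) ≤ s - 1) hq
        simpa using h0
      have hinv : 2 - s ≤ s⁻¹ := by
        rw [← sub_nonneg]
        have h0 : s⁻¹ - (2 - s) = (s-1)^2 / s := by field_simp; ring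
        rw [h0]; positivity
      have hbound : K * (2 - s) + B + C * (1 + ((3+2*p)/3) * (s - 1))
          ≤ K * s⁻¹ + B + C * x ^ (3+2*p) := by
        rw [hxa]
        have h1 : K * (2-s) ≤ K * s⁻¹ := mul_le_mul_of_nonneg_left hinv hKpos.le
        have h2 : C * (1 + ((3+2*p)/3) * (s - 1)) ≤ C * s ^ ((3+2*p)/3) :=
          mul_le_mul_of_nonneg_left hbern hCpos.le
        linarith
      have hident : K * (2 - s) + B + C * (1 + ((3+2*p)/3) * (s - 1))
          = 2 + (2*(p-2)/3) * (1 - s) := by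
        have h0 : K * (2 - s) + B + C * (1 + ((3+2*p)/3) * (s - 1))
            = (K + B + C) + (K - C * ((3+2*p)/3)) * (1 - s) := by ring
        rw [h0, hsum, hKC]
      have hsgtK : 1 - s < 2/(3+p) := by
        rw [hKalt] at hsK; linarith
      have hfin : (2*(p-2)/3) * (1 - s) > -1 := by
        rcases le_or_gt p 2 with hp2 | hp2
        · have ht : 0 < 1 - s := by linarith
          have h2 : (1 - s) * (3+p) < 2 := by
            rw [← lt_div_iff₀ h3p]; exact hsgtK
          nlinarith [mul_nonneg (by linarith : (0:ℝ) ≤ 2-p)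
            (by linarith : (0:ℝ) ≤ 2 - (1-s)*(3+p)), mul_nonneg hp ht.le]
        · nlinarith [mul_nonneg (by linarith : (0:ℝ) ≤ p-2) (by linarith : (0:ℝ) ≤ 1-s)]
      linarith [hbound, hident ▸ hbound]
end

section
/- For every real d with 0 < d < 1 and every p > 3/2, the inequality (2/(3+p))·(-1 + d^(-3/2) - d^((3+2p)/2) + d^(3+p)) + (1/(1+p))·(1 - d^(1+p)) < d^(-3/2) - d^(3/2) holds. -/
open Real

set_option maxHeartbeats 1000000 in
theorem stmt_4 (d p : ℝ) (hd0 : 0 < d) (hd1 : d < 1) (hp : 3/2 < p) :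
    (2/(3 + p)) * (-1 + d ^ (-(3:ℝ)/2) - d ^ ((3 + 2*p)/2) + d ^ (3 + p))
      + (1/(1 + p)) * (1 - d ^ (1 + p))
      < d ^ (-(3:ℝ)/2) - d ^ ((3:ℝ)/2) := by
  set s : ℝ := d ^ ((3:ℝ)/2) with hs_def
  set w : ℝ := d ^ p with hw_def
  set y : ℝ := d ^ ((5:ℝ)/2) with hy_def
  have hs0 : 0 < s := rpow_pos_of_pos hd0 _
  have hs1 : s < 1 := rpow_lt_one hd0.le hd1 (by norm_num)
  have hw0 : 0 < w := rpow_pos_of_pos hd0 _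
  have hsd : s ≤ d := by
    have := rpow_le_rpow_of_exponent_ge hd0 hd1.le (by norm_num : (1:ℝ) ≤ 3/2)
    simpa [hs_def] using this
  -- rewrite all rpow terms
  have hA : d ^ (-(3:ℝ)/2) = s⁻¹ := by
    rw [hs_def, ← rpow_neg hd0.le]; norm_num
  have hB : d ^ ((3 + 2*p)/2) = s * w := by
    rw [hs_def, hw_def, ← rpow_add hd0]; ring_nf
  have hC : d ^ (3 + p) = s * s * w := by
    rw [hs_def, hw_def, ← rpow_add hd0, ← rpow_add hd0]; ring_nf
  have hD : d ^ (1 + p) = d * w := by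
    rw [hw_def, rpow_add hd0, rpow_one]
  have hE : y = d * s := by
    rw [hy_def, hs_def, ← rpow_one_add' hd0.le (by norm_num)]; norm_num
  have hp1 : (0:ℝ) < 1 + p := by linarith
  have hp3 : (0:ℝ) < 3 + p := by linarith
  -- Bernoulli step: (1 - d^(1+p))/(1+p) ≤ (2/5)(1 - y)
  have hy0 : 0 < y := rpow_pos_of_pos hd0 _
  have hy1 : y < 1 := rpow_lt_one hd0.le hd1 (by norm_num)
  have hBer : 1 - d * w ≤ (2/5) * (1 + p) * (1 - y) := by
    have hr : (1:ℝ) ≤ 2 * (1 + p) / 5 := by linarith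
    have hpow : y ^ (2 * (1 + p) / 5) = d * w := by
      rw [hy_def, ← Real.rpow_mul hd0.le,
        show (5:ℝ)/2 * (2*(1+p)/5) = 1 + p by ring, hD]
    have hb := one_add_mul_self_le_rpow_one_add (by linarith : (-1:ℝ) ≤ y - 1) hr
    rw [show (1:ℝ) + (y - 1) = y by ring] at hb
    rw [hpow] at hb
    nlinarith [hb]
  have h2 : (1/(1 + p)) * (1 - d * w) ≤ (2/5) * (1 - y) := by
    rw [div_mul_eq_mul_div, one_mul, div_le_iff₀ hp1]
    nlinarith [hBer]
  -- bound the first group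
  have he1 : 1 < s⁻¹ := (one_lt_inv_iff₀).2 ⟨hs0, hs1⟩
  have hc1 : 2/(3 + p) < 4/9 := by
    rw [div_lt_div_iff₀ hp3 (by norm_num)]; linarith
  have hc1pos : 0 < 2/(3 + p) := by positivity
  have h1 : (2/(3 + p)) * (-1 + s⁻¹ - s * w + s * s * w) < (4/9) * (s⁻¹ - 1) := by
    have hneg : s * w * (s - 1) < 0 := by
      apply mul_neg_of_pos_of_neg (by positivity); linarith
    nlinarith [mul_pos hc1pos (sub_pos.2 he1), hneg]
  -- final polynomial inequality
  have h3 : (4/9) * (s⁻¹ - 1) + (2/5) * (1 - d * s) < s⁻¹ - s := by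
    have hse : s * s⁻¹ = 1 := mul_inv_cancel₀ hs0.ne'
    have key : 0 < (1 - s) * (25 + 27 * s - 18 * s^2) + 18 * (d - s) * s^2 := by
      have t1 : 0 < (1 - s) * (25 + 27 * s - 18 * s^2) :=
        mul_pos (by linarith) (by nlinarith)
      have t2 : 0 ≤ 18 * (d - s) * s^2 := mul_nonneg (by linarith) (sq_nonneg s)
      linarith
    rw [← sub_pos]
    have hgoal : (s⁻¹ - s - ((4/9) * (s⁻¹ - 1) + (2/5) * (1 - d * s))) * (45 * s)
        = (1 - s) * (25 + 27 * s - 18 * s^2) + 18 * (d - s) * s^2 := by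
      field_simp
      ring
    have h45 : (0:ℝ) < 45 * s := by positivity
    by_contra hcon
    push_neg at hcon
    nlinarith [mul_nonpos_of_nonpos_of_nonneg hcon h45.le]
  rw [hA, hB, hC, hD]
  calc (2/(3 + p)) * (-1 + s⁻¹ - s * w + s * s * w) + (1/(1 + p)) * (1 - d * w)
      < (4/9) * (s⁻¹ - 1) + (2/5) * (1 - y) := by linarith
    _ = (4/9) * (s⁻¹ - 1) + (2/5) * (1 - d * s) := by rw [hE]
    _ < s⁻¹ - s := h3
end

section
/- For p ∈ [0, 3/4) and x ∈ (0,1), one has (1 + 8/15)·x^(9/2) + x^(-3)/3 > 1. Consequently K(p)·x^(-3) + B(p)·(1 - x^(3+2p)) + (1 + 2/(3+p))·x^(3+2p) > 1 whenever K(p) > 1/3, B(p) ≥ 0 and x^(3+2p) ≥ x^(9/2). -/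
open Real

lemma key_poly (z : ℝ) (hz : 0 < z) : 23*z^5 - 15*z^2 + 5 > 0 := by
  nlinarith [sq_nonneg (z - 1), sq_nonneg (z^2 - z), sq_nonneg z, pow_pos hz 5,
    sq_nonneg (z^2 + z - 1), mul_pos hz hz]

theorem stmt_6 (p x : ℝ) (hp0 : 0 ≤ p) (hp1 : p < 3/4) (hx0 : 0 < x) (hx1 : x < 1) :
    (1 + 8/15) * x ^ ((9:ℝ)/2) + x ^ (-(3:ℝ)) / 3 > 1 ∧
    ((1 + p)/(3 + p) > 1/3 → 4*p/(3 + 2*p) ≥ 0 → x ^ (3 + 2*p) ≥ x ^ ((9:ℝ)/2) →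
      ((1 + p)/(3 + p)) * x ^ (-(3:ℝ)) + (4*p/(3 + 2*p)) * (1 - x ^ (3 + 2*p))
        + (1 + 2/(3 + p)) * x ^ (3 + 2*p) > 1) := by
  set z := x ^ ((3:ℝ)/2) with hzdef
  have hz : 0 < z := rpow_pos_of_pos hx0 _
  have h92 : x ^ ((9:ℝ)/2) = z ^ 3 := by
    rw [hzdef, ← rpow_natCast (x ^ ((3:ℝ)/2)) 3, ← rpow_mul hx0.le]
    norm_num
  have h3 : x ^ ((3:ℝ)) = z ^ 2 := by
    rw [hzdef, ← rpow_natCast (x ^ ((3:ℝ)/2)) 2, ← rpow_mul hx0.le]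
    norm_num
  have hneg : x ^ (-(3:ℝ)) = (z ^ 2)⁻¹ := by
    rw [rpow_neg hx0.le, h3]
  have hz2 : (0:ℝ) < z ^ 2 := by positivity
  have hmain : (1 + 8/15) * x ^ ((9:ℝ)/2) + x ^ (-(3:ℝ)) / 3 > 1 := by
    rw [h92, hneg]
    have hk := key_poly z hz
    have hinv := mul_inv_cancel₀ hz2.ne'
    nlinarith [hk, hinv, hz2, mul_pos hz2 hz2]
  refine ⟨hmain, fun hK hB ht => ?_⟩
  have ht0 : 0 < x ^ (3 + 2*p) := rpow_pos_of_pos hx0 _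
  have ht1 : x ^ (3 + 2*p) < 1 := rpow_lt_one hx0.le hx1 (by linarith)
  have ha0 : 0 < x ^ (-(3:ℝ)) := rpow_pos_of_pos hx0 _
  have hs0 : 0 < x ^ ((9:ℝ)/2) := rpow_pos_of_pos hx0 _
  have h3p : (0:ℝ) < 3 + p := by linarith
  have hc : 8/15 ≤ 2/(3 + p) := by
    rw [div_le_div_iff₀ (by norm_num) h3p]; linarith
  have hKa : (1/3) * x ^ (-(3:ℝ)) ≤ ((1 + p)/(3 + p)) * x ^ (-(3:ℝ)) :=
    mul_le_mul_of_nonneg_right hK.le ha0.le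
  have hBt : 0 ≤ (4*p/(3 + 2*p)) * (1 - x ^ (3 + 2*p)) :=
    mul_nonneg hB (by linarith)
  have hct : (1 + 8/15) * x ^ (3 + 2*p) ≤ (1 + 2/(3 + p)) * x ^ (3 + 2*p) :=
    mul_le_mul_of_nonneg_right (by linarith) ht0.le
  have hts : (1 + 8/15) * x ^ ((9:ℝ)/2) ≤ (1 + 8/15) * x ^ (3 + 2*p) :=
    mul_le_mul_of_nonneg_left ht (by norm_num)
  linarith [hmain]
end

section
/- Let λ₁ > λ₂ > 0 and γ₁, γ₂, δ₁, δ₂ be continuous positive functions on [0, x₀), and suppose additionally that γ₁/λ₁ + δ₂/λ₂ > δ₁/λ₁ + γ₂/λ₂ pointwise. Define φ(x) = exp(∫₀ˣ (γ₁/λ₁ + δ₂/λ₂)) and let η̄ solve η̄' = δ₁φ/λ₁ + (γ₂/(λ₂φ))·η̄² with η̄(0) = 1 on [0, x₀). Then η̄(x) < φ(x) for all x ∈ (0, x₀). -/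
open Real Topology Filter

theorem stmt_10 (x₀ : ℝ) (hx₀ : 0 < x₀)
    (lam₁ lam₂ γ₁ γ₂ δ₁ δ₂ φ ηb : ℝ → ℝ)
    (hcont : ContinuousOn lam₁ (Set.Ico 0 x₀) ∧ ContinuousOn lam₂ (Set.Ico 0 x₀) ∧
      ContinuousOn γ₁ (Set.Ico 0 x₀) ∧ ContinuousOn γ₂ (Set.Ico 0 x₀) ∧
      ContinuousOn δ₁ (Set.Ico 0 x₀) ∧ ContinuousOn δ₂ (Set.Ico 0 x₀))
    (hlam : ∀ x ∈ Set.Ico 0 x₀, 0 < lam₂ x ∧ lam₂ x < lam₁ x)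
    (hpos : ∀ x ∈ Set.Ico 0 x₀, 0 < γ₁ x ∧ 0 < γ₂ x ∧ 0 < δ₁ x ∧ 0 < δ₂ x)
    (hcoef : ∀ x ∈ Set.Ico 0 x₀,
      δ₁ x / lam₁ x + γ₂ x / lam₂ x < γ₁ x / lam₁ x + δ₂ x / lam₂ x)
    (hφ : ∀ x ∈ Set.Ico 0 x₀,
      φ x = Real.exp (∫ t in (0:ℝ)..x, γ₁ t / lam₁ t + δ₂ t / lam₂ t))
    (hη0 : ηb 0 = 1)
    (hηode : ∀ x ∈ Set.Ico 0 x₀,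
      HasDerivAt ηb (δ₁ x * φ x / lam₁ x + (γ₂ x / (lam₂ x * φ x)) * (ηb x)^2) x) :
    ∀ x ∈ Set.Ioo 0 x₀, ηb x < φ x := by
  set f : ℝ → ℝ := fun t => γ₁ t / lam₁ t + δ₂ t / lam₂ t with hf_def
  set F : ℝ → ℝ := fun x => ∫ t in (0:ℝ)..x, f t with hF_def
  set G : ℝ → ℝ := fun x =>
    δ₁ x * φ x / lam₁ x + (γ₂ x / (lam₂ x * φ x)) * (ηb x)^2 with hG_def
  obtain ⟨hc1, hc2, hc3, hc4, hc5, hc6⟩ := hcont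
  have hlam₂ : ∀ x ∈ Set.Ico 0 x₀, lam₂ x ≠ 0 := fun x hx => (hlam x hx).1.ne'
  have hlam₁ : ∀ x ∈ Set.Ico 0 x₀, lam₁ x ≠ 0 :=
    fun x hx => ((hlam x hx).1.trans (hlam x hx).2).ne'
  have hφpos : ∀ x ∈ Set.Ico 0 x₀, 0 < φ x := fun x hx => by
    rw [hφ x hx]; exact Real.exp_pos _
  have hφ0 : φ 0 = 1 := by simpa using hφ 0 ⟨le_refl 0, hx₀⟩
  -- continuity of f on Ico 0 x₀
  have hfc : ContinuousOn f (Set.Ico 0 x₀) :=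
    (hc3.div hc1 hlam₁).add (hc6.div hc2 hlam₂)
  -- the key strict derivative inequality at contact points
  have hbound : ∀ x ∈ Set.Ico 0 x₀, ηb x = φ x → G x < f x * φ x := by
    intro x hx heq
    have h1 : G x = (δ₁ x / lam₁ x + γ₂ x / lam₂ x) * φ x := by
      rw [hG_def]
      simp only [heq]
      have e1 := hlam₁ x hx
      have e2 := hlam₂ x hx
      have e3 := (hφpos x hx).ne'
      field_simp
    rw [h1, hf_def]
    exact mul_lt_mul_of_pos_right (hcoef x hx) (hφpos x hx)
  -- f agrees with exp ∘ F pointwise statement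
  have hφF : ∀ x ∈ Set.Ico 0 x₀, φ x = Real.exp (F x) := hφ
  have hIcoNhds : ∀ x ∈ Set.Ico 0 x₀, Set.Ico 0 x₀ ∈ 𝓝[Set.Ici x] x := by
    intro x hx
    rw [mem_nhdsWithin]
    exact ⟨Set.Iio x₀, isOpen_Iio, hx.2, fun t ht => ⟨hx.1.trans ht.2, ht.1⟩⟩
  -- right derivative of φ on Ico 0 x₀
  have hφderivWithin : ∀ x ∈ Set.Ico 0 x₀,
      HasDerivWithinAt φ (f x * φ x) (Set.Ici x) x := by
    intro x hx
    have hint : IntervalIntegrable f MeasureTheory.volume 0 x := by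
      apply ContinuousOn.intervalIntegrable
      apply hfc.mono
      rw [Set.uIcc_of_le hx.1]
      exact fun t ht => ⟨ht.1, lt_of_le_of_lt ht.2 hx.2⟩
    have hmem : Set.Ioo x x₀ ∈ 𝓝[>] x := Ioo_mem_nhdsGT_of_mem ⟨le_refl x, hx.2⟩
    have hmeas : StronglyMeasurableAtFilter f (𝓝[>] x) :=
      ⟨Set.Ioo x x₀, hmem, (hfc.mono (fun t ht => ⟨hx.1.trans ht.1.le, ht.2⟩)).aestronglyMeasurable
        measurableSet_Ioo⟩
    have hcw : ContinuousWithinAt f (Set.Ioi x) x := by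
      apply (hfc.continuousWithinAt hx).mono_of_mem_nhdsWithin
      rw [mem_nhdsWithin]
      exact ⟨Set.Iio x₀, isOpen_Iio, hx.2, fun t ht => ⟨hx.1.trans (le_of_lt ht.2), ht.1⟩⟩
    have hF : HasDerivWithinAt F (f x) (Set.Ici x) x :=
      intervalIntegral.integral_hasDerivWithinAt_right hint hmeas hcw
    have hexp : HasDerivWithinAt (fun u => Real.exp (F u)) (Real.exp (F x) * f x)
        (Set.Ici x) x := (Real.hasDerivAt_exp (F x)).comp_hasDerivWithinAt x hF
    have hco : φ x = Real.exp (F x) := hφF x hx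
    have heq : φ =ᶠ[𝓝[Set.Ici x] x] fun u => Real.exp (F u) := by
      filter_upwards [hIcoNhds x hx] with t ht
      exact hφF t ht
    have h2 := hexp.congr_of_eventuallyEq heq hco
    rw [show f x * φ x = Real.exp (F x) * f x by rw [hco]; ring]
    exact h2
  -- weak comparison on Ico 0 x₀
  have key : ∀ x ∈ Set.Ico 0 x₀, ηb x ≤ φ x := by
    intro b hb
    have hsub : Set.Icc 0 b ⊆ Set.Ico 0 x₀ := fun t ht => ⟨ht.1, lt_of_le_of_lt ht.2 hb.2⟩
    have hsub' : Set.Ico 0 b ⊆ Set.Ico 0 x₀ := fun t ht => ⟨ht.1, ht.2.trans hb.2⟩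
    have hηcont : ContinuousOn ηb (Set.Icc 0 b) :=
      fun t ht => ((hηode t (hsub ht)).continuousAt).continuousWithinAt
    have hφcont : ContinuousOn φ (Set.Icc 0 b) := by
      have hintOn : MeasureTheory.IntegrableOn f (Set.uIcc 0 b) MeasureTheory.volume := by
        rw [Set.uIcc_of_le hb.1]
        exact (hfc.mono hsub).integrableOn_Icc
      have hFcont : ContinuousOn F (Set.uIcc 0 b) :=
        intervalIntegral.continuousOn_primitive_interval hintOn
      rw [Set.uIcc_of_le hb.1] at hFcont
      exact (Real.continuous_exp.comp_continuousOn hFcont).congr fun t ht => hφF t (hsub ht)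
    have hslope : ∀ x ∈ Set.Ico 0 b, ∀ r, G x < r → ∃ᶠ z in 𝓝[>] x, slope ηb x z < r := by
      intro x hx r hr
      have h1 : Filter.Tendsto (slope ηb x) (𝓝[≠] x) (𝓝 (G x)) :=
        hasDerivAt_iff_tendsto_slope.1 (hηode x (hsub' hx))
      have h2 : Filter.Tendsto (slope ηb x) (𝓝[>] x) (𝓝 (G x)) :=
        h1.mono_left (nhdsWithin_mono x fun y hy => ne_of_gt hy)
      exact (h2.eventually_lt_const hr).frequently
    have := image_le_of_liminf_slope_right_lt_deriv_boundary' hηcont hslope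
      (by rw [hη0, hφ0]) hφcont
      (fun x hx => hφderivWithin x (hsub' hx))
      (fun x hx hxe => hbound x (hsub' hx) hxe)
    exact this ⟨hb.1, le_refl b⟩
  -- strict inequality on Ioo 0 x₀
  intro x hx
  have hx' : x ∈ Set.Ico 0 x₀ := ⟨hx.1.le, hx.2⟩
  rcases lt_or_eq_of_le (key x hx') with h | h
  · exact h
  · exfalso
    -- derivative of φ at interior point x (full derivative)
    have hint : IntervalIntegrable f MeasureTheory.volume 0 x := by
      apply ContinuousOn.intervalIntegrable
      apply hfc.mono
      rw [Set.uIcc_of_le hx.1.le]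
      exact fun t ht => ⟨ht.1, lt_of_le_of_lt ht.2 hx.2⟩
    have hmemI : Set.Ioo 0 x₀ ∈ 𝓝 x := Ioo_mem_nhds hx.1 hx.2
    have hmeas : StronglyMeasurableAtFilter f (𝓝 x) :=
      ⟨Set.Ioo 0 x₀, hmemI, (hfc.mono Set.Ioo_subset_Ico_self).aestronglyMeasurable
        measurableSet_Ioo⟩
    have hca : ContinuousAt f x :=
      (hfc.mono Set.Ioo_subset_Ico_self).continuousAt hmemI
    have hF : HasDerivAt F (f x) x :=
      intervalIntegral.integral_hasDerivAt_right hint hmeas hca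
    have hexp : HasDerivAt (fun u => Real.exp (F u)) (Real.exp (F x) * f x) x :=
      (Real.hasDerivAt_exp (F x)).comp x hF
    have heqF : (fun u => Real.exp (F u)) =ᶠ[𝓝 x] φ := by
      filter_upwards [hmemI] with t ht
      exact (hφF t ⟨ht.1.le, ht.2⟩).symm
    have hφderiv : HasDerivAt φ (Real.exp (F x) * f x) x := hexp.congr_of_eventuallyEq heqF.symm
    have hφderiv' : HasDerivAt φ (f x * φ x) x := by
      rw [show f x * φ x = Real.exp (F x) * f x by rw [hφF x hx']; ring]
      exact hφderiv
    -- ηb - φ has a local max at x with negative derivative: contradiction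
    have hdiff : HasDerivAt (fun y => ηb y - φ y) (G x - f x * φ x) x :=
      (hηode x hx').sub hφderiv'
    have hmax : IsLocalMax (fun y => ηb y - φ y) x := by
      filter_upwards [hmemI] with t ht
      have := key t ⟨ht.1.le, ht.2⟩
      simp only [h, sub_self]
      linarith
    have hzero := hmax.hasDerivAt_eq_zero hdiff
    have := hbound x hx' h
    linarith
end

section
/- Let G, I : [0, x₀) → ℝ be continuous with I > 0, and suppose η₀ is a positive solution of the Riccati equation η' = G + I·η² on [0, x₀) with η₀(0) < 1. If ∫₀ˣ e^{∫₀ˢ 2I(ξ)η₀(ξ)dξ}·I(s) ds < 1/(1 - η₀(0)) for every x ∈ [0, x₀), then the solution η̄ of η̄' = G + I·η̄², η̄(0) = 1, exists on all of [0, x₀) and is given by η̄(x) = η₀(x) + e^{∫₀ˣ 2Iη₀} / (1/(1-η₀(0)) - ∫₀ˣ e^{∫₀ˢ 2Iη₀}·I(s) ds). -/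
/-!
Writing `η̄ = η₀ + u`, the Riccati equation for `η̄` becomes the Bernoulli equation
`u' = 2Iη₀ u + I u²`, which `z = 1/u` linearises to `z' = -2Iη₀ z - I`. Its solution with
`z(0) = 1/(1 - η₀(0))` is `z = e^{-∫₀ˣ 2Iη₀} (1/(1 - η₀(0)) - ∫₀ˣ e^{∫₀ˢ 2Iη₀} I)`, and the integral
bound keeps it positive, so `u = 1/z` does not blow up on `[0, x₀)`.
-/

open Real Set Filter Topology

theorem ContinuousOn.hasDerivWithinAt_integral_Ici {E : Type*} [NormedAddCommGroup E]
    [NormedSpace ℝ E] [CompleteSpace E] {g : ℝ → E} {a b x : ℝ}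
    (hg : ContinuousOn g (Ico a b)) (hx : x ∈ Ico a b) :
    HasDerivWithinAt (fun y => ∫ t in a..y, g t) (g x) (Ici a) x := by
  obtain ⟨c, hxc, hcb⟩ := exists_between hx.2
  have hgc : ContinuousOn g (Icc a c) := hg.mono (Icc_subset_Ico_right hcb)
  have hxac : x ∈ Icc a c := ⟨hx.1, hxc.le⟩
  have : Fact (x ∈ Icc a c) := ⟨hxac⟩
  have hderiv : HasDerivWithinAt (fun y => ∫ t in a..y, g t) (g x) (Icc a c) x :=
    intervalIntegral.integral_hasDerivWithinAt_right
      (hgc.mono (uIcc_subset_Icc (left_mem_Icc.2 (hx.1.trans hxc.le)) hxac)).intervalIntegrable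
      (hgc.stronglyMeasurableAtFilter_nhdsWithin measurableSet_Icc x) (hgc x hxac)
  exact hderiv.mono_of_mem_nhdsWithin <|
    mem_of_superset (inter_mem_nhdsWithin (Ici a) (Iio_mem_nhds hxc)) fun y hy => ⟨hy.1, hy.2.le⟩

theorem hasDerivWithinAt_add_div_of_riccati {η E D : ℝ → ℝ} {s : Set ℝ} {x G I : ℝ}
    (hη : HasDerivWithinAt η (G + I * η x ^ 2) s x)
    (hE : HasDerivWithinAt E (E x * (2 * I * η x)) s x)
    (hD : HasDerivWithinAt D (-(E x * I)) s x) (hDx : D x ≠ 0) :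
    HasDerivWithinAt (fun y => η y + E y / D y) (G + I * (η x + E x / D x) ^ 2) s x := by
  refine (hη.add (hE.div hD hDx)).congr_deriv ?_
  field_simp
  ring

/-- The conclusion asks for two-sided derivatives at `0`, while the data only live on `[0, x₀)`:
extending affinely to the left with the right derivative as slope supplies them. -/
noncomputable def extendLeft (f : ℝ → ℝ) (a c : ℝ) : ℝ → ℝ :=
  fun x => if a ≤ x then f x else f a + c * (x - a)

section extendLeft

variable {f : ℝ → ℝ} {a c x : ℝ}

theorem extendLeft_of_le (h : a ≤ x) : extendLeft f a c x = f x := if_pos h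

theorem hasDerivAt_extendLeft_of_lt {f' : ℝ} (hf : HasDerivWithinAt f f' (Ici a) x) (hx : a < x) :
    HasDerivAt (extendLeft f a c) f' x :=
  (hf.hasDerivAt (Ici_mem_nhds hx)).congr_of_eventuallyEq <|
    eventually_of_mem (Ioi_mem_nhds hx) fun _ hy => extendLeft_of_le (le_of_lt hy)

theorem hasDerivAt_extendLeft_self (hf : HasDerivWithinAt f c (Ici a) a) :
    HasDerivAt (extendLeft f a c) c a := by
  have hleft : HasDerivWithinAt (extendLeft f a c) c (Iic a) a := by
    have hlin : HasDerivAt (fun y => f a + c * (y - a)) c a := by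
      simpa using ((hasDerivAt_id a).sub_const a).const_mul c |>.const_add (f a)
    refine hlin.hasDerivWithinAt.congr (fun y hy => ?_) (by simp [extendLeft])
    rcases (mem_Iic.1 hy).eq_or_lt with rfl | hy
    · simp [extendLeft]
    · simp [extendLeft, not_le.2 hy]
  have hright : HasDerivWithinAt (extendLeft f a c) c (Ici a) a :=
    hf.congr (fun y hy => extendLeft_of_le hy) (extendLeft_of_le le_rfl)
  simpa [Iic_union_Ici] using hleft.union hright

theorem hasDerivAt_extendLeft {f' : ℝ → ℝ} {b : ℝ}
    (hf : ∀ y ∈ Ico a b, HasDerivWithinAt f (f' y) (Ici a) y) (hx : x ∈ Ico a b) :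
    HasDerivAt (extendLeft f a (f' a)) (f' x) x := by
  rcases hx.1.eq_or_lt with rfl | hax
  · exact hasDerivAt_extendLeft_self (hf _ hx)
  · exact hasDerivAt_extendLeft_of_lt (hf x hx) hax

end extendLeft

theorem stmt_14_general (x₀ : ℝ) (G I η₀ : ℝ → ℝ)
    (hIcont : ContinuousOn I (Set.Ico 0 x₀))
    (hη0 : η₀ 0 < 1)
    (hηode : ∀ x ∈ Set.Ico 0 x₀, HasDerivAt η₀ (G x + I x * (η₀ x)^2) x)
    (hbound : ∀ x ∈ Set.Ico 0 x₀,
      (∫ s in (0:ℝ)..x, Real.exp (∫ t in (0:ℝ)..s, 2 * I t * η₀ t) * I s)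
        < 1 / (1 - η₀ 0)) :
    ∃ ηb : ℝ → ℝ, ηb 0 = 1 ∧
      (∀ x ∈ Set.Ico 0 x₀, HasDerivAt ηb (G x + I x * (ηb x)^2) x) ∧
      (∀ x ∈ Set.Ico 0 x₀,
        ηb x = η₀ x + Real.exp (∫ t in (0:ℝ)..x, 2 * I t * η₀ t) /
          (1 / (1 - η₀ 0) -
            ∫ s in (0:ℝ)..x, Real.exp (∫ t in (0:ℝ)..s, 2 * I t * η₀ t) * I s)) := by
  set A : ℝ → ℝ := fun y => ∫ t in (0:ℝ)..y, 2 * I t * η₀ t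
  set F : ℝ → ℝ := fun y => ∫ s in (0:ℝ)..y, exp (A s) * I s
  set φ : ℝ → ℝ := fun x => η₀ x + exp (A x) / (1 / (1 - η₀ 0) - F x)
  have hηcont : ContinuousOn η₀ (Ico 0 x₀) :=
    fun x hx => (hηode x hx).continuousAt.continuousWithinAt
  have hA : ∀ x ∈ Ico 0 x₀, HasDerivWithinAt A (2 * I x * η₀ x) (Ici 0) x :=
    fun x => ((continuousOn_const.mul hIcont).mul hηcont).hasDerivWithinAt_integral_Ici
  have hF : ∀ x ∈ Ico 0 x₀, HasDerivWithinAt F (exp (A x) * I x) (Ici 0) x := by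
    have hAcont : ContinuousOn A (Ico 0 x₀) :=
      fun x hx => (hA x hx).continuousWithinAt.mono Ico_subset_Ici_self
    exact fun x =>
      ((continuous_exp.comp_continuousOn hAcont).mul hIcont).hasDerivWithinAt_integral_Ici
  have hφ : ∀ x ∈ Ico 0 x₀, HasDerivWithinAt φ (G x + I x * φ x ^ 2) (Ici 0) x := fun x hx =>
    hasDerivWithinAt_add_div_of_riccati (hηode x hx).hasDerivWithinAt (hA x hx).exp
      ((hF x hx).const_sub _) (sub_pos.2 (hbound x hx)).ne'
  have hφ0 : φ 0 = 1 := by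
    have : 1 - η₀ 0 ≠ 0 := by linarith
    have hA0 : A 0 = 0 := intervalIntegral.integral_same
    simp only [φ, F, hA0, intervalIntegral.integral_same, exp_zero, sub_zero]
    field_simp
    ring
  refine ⟨extendLeft φ 0 (G 0 + I 0 * φ 0 ^ 2), ?_, fun x hx => ?_, fun x hx => extendLeft_of_le hx.1⟩
  · rw [extendLeft_of_le le_rfl, hφ0]
  · rw [extendLeft_of_le hx.1]
    exact hasDerivAt_extendLeft hφ hx

theorem stmt_14 (x₀ : ℝ) (hx₀ : 0 < x₀) (G I η₀ : ℝ → ℝ)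
    (hGcont : ContinuousOn G (Set.Ico 0 x₀)) (hIcont : ContinuousOn I (Set.Ico 0 x₀))
    (hIpos : ∀ x ∈ Set.Ico 0 x₀, 0 < I x)
    (hηpos : ∀ x ∈ Set.Ico 0 x₀, 0 < η₀ x)
    (hη0 : η₀ 0 < 1)
    (hηode : ∀ x ∈ Set.Ico 0 x₀, HasDerivAt η₀ (G x + I x * (η₀ x)^2) x)
    (hbound : ∀ x ∈ Set.Ico 0 x₀,
      (∫ s in (0:ℝ)..x, Real.exp (∫ t in (0:ℝ)..s, 2 * I t * η₀ t) * I s)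
        < 1 / (1 - η₀ 0)) :
    ∃ ηb : ℝ → ℝ, ηb 0 = 1 ∧
      (∀ x ∈ Set.Ico 0 x₀, HasDerivAt ηb (G x + I x * (ηb x)^2) x) ∧
      (∀ x ∈ Set.Ico 0 x₀,
        ηb x = η₀ x + Real.exp (∫ t in (0:ℝ)..x, 2 * I t * η₀ t) /
          (1 / (1 - η₀ 0) -
            ∫ s in (0:ℝ)..x, Real.exp (∫ t in (0:ℝ)..s, 2 * I t * η₀ t) * I s)) :=
  stmt_14_general x₀ G I η₀ hIcont hη0 hηode hbound
end
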